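/- arXiv:2508.01753 — 2 statements merged into one kernel-verified Lean document; each statement's English description precedes it below -/
import Mathlib

section
/- Let $\nu : (-\infty, 0) \to \mathbb{R}_{\geq 0}$ be an increasing function satisfying $\nu(t) \leq e^t$ for all $t < 0$, and let $p > 1$. Then $\liminf_{t \to -\infty} e^{-t} \int_t^0 e^{-p(s-t)}\, d\nu(s) \leq \frac{2}{p-1}$. -/
open MeasureTheory Set Filter Real
open scoped ENNReal

private lemma lint_exp_Ioc (c a b : ℝ) (hc : c ≠ 0) (hab : a ≤ b) :
    ∫⁻ s in Set.Ioc a b, ENNReal.ofReal (Real.exp (c*s)) ∂volume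
      = ENNReal.ofReal ((Real.exp (c*b) - Real.exp (c*a))/c) := by
  have hcont : Continuous fun x : ℝ => Real.exp (c*x) :=
    Real.continuous_exp.comp (continuous_const.mul continuous_id)
  have hint : IntegrableOn (fun x : ℝ => Real.exp (c*x)) (Set.Ioc a b) volume :=
    (hcont.integrableOn_Icc).mono_set Set.Ioc_subset_Icc_self
  rw [← MeasureTheory.ofReal_integral_eq_lintegral_ofReal hint
      (Filter.Eventually.of_forall fun x => (Real.exp_pos _).le)]
  congr 1
  have hderiv : ∀ x ∈ Set.uIcc a b, HasDerivAt (fun x => Real.exp (c*x)/c) (Real.exp (c*x)) x := by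
    intro x _
    have h1 : HasDerivAt (fun x : ℝ => c * x) c x := by
      simpa using (hasDerivAt_id x).const_mul c
    have h2 := h1.exp.div_const c
    simpa [mul_comm, mul_div_assoc, mul_div_cancel_left₀ _ hc] using h2
  have hii := intervalIntegral.integral_eq_sub_of_hasDerivAt hderiv
    (hcont.intervalIntegrable a b)
  rw [← intervalIntegral.integral_of_le hab, hii]
  ring

private lemma lint_exp_Ioc_le (c a b : ℝ) (hc : 0 < c) :
    ∫⁻ s in Set.Ioc a b, ENNReal.ofReal (Real.exp (c*s)) ∂volume
      ≤ ENNReal.ofReal (Real.exp (c*b)/c) := by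
  rcases le_or_gt a b with hab | hab
  · rw [lint_exp_Ioc c a b hc.ne' hab]
    apply ENNReal.ofReal_le_ofReal
    exact (div_le_div_iff_of_pos_right hc).mpr (by linarith [Real.exp_pos (c*a)])
  · rw [Set.Ioc_eq_empty hab.not_gt, Measure.restrict_empty, lintegral_zero_measure]
    exact zero_le

section bounds
variable (ν : StieltjesFunction ℝ)
    (hν0 : ∀ t < (0:ℝ), 0 ≤ ν t)
    (hνe : ∀ t < (0:ℝ), ν t ≤ Real.exp t)

include hν0 hνe

private lemma mIoc (a b : ℝ) (ha : a < 0) (hb : b < 0) :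
    ν.measure (Set.Ioc a b) ≤ ENNReal.ofReal (Real.exp b) := by
  rw [ν.measure_Ioc]
  exact ENNReal.ofReal_le_ofReal (by linarith [hν0 a ha, hνe b hb])

private lemma mIoo0 (a : ℝ) (ha : a < 0) :
    ν.measure (Set.Ioo a 0) ≤ ENNReal.ofReal 1 := by
  rw [ν.measure_Ioo]
  apply ENNReal.ofReal_le_ofReal
  have hll : Function.leftLim ν 0 ≤ 1 := by
    apply le_of_tendsto (ν.mono.tendsto_leftLim 0)
    filter_upwards [self_mem_nhdsWithin] with v hv
    calc ν v ≤ Real.exp v := hνe v hv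
    _ ≤ 1 := Real.exp_le_one_iff.mpr (le_of_lt hv)
  linarith [hν0 a ha]

private lemma mIoo (a v : ℝ) (ha : a < 0) (hv : v ≤ 0) :
    ν.measure (Set.Ioo a v) ≤ ENNReal.ofReal (Real.exp v) := by
  rcases eq_or_lt_of_le hv with rfl | hv'
  · simpa using mIoo0 ν hν0 hνe a ha
  · exact (measure_mono Set.Ioo_subset_Ioc_self).trans (mIoc ν hν0 hνe a v ha hv')

private lemma mSing (a : ℝ) (ha : a < 0) :
    ν.measure {a} ≤ ENNReal.ofReal (Real.exp a) := by
  refine (measure_mono ?_).trans (mIoc ν hν0 hνe (a-1) a (by linarith) ha)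
  intro x hx; simp at hx; subst hx; constructor <;> linarith

private lemma mIco (t v : ℝ) (ht : t < 0) (htv : t ≤ v) (hv : v ≤ 0) :
    ν.measure (Set.Ico t v) ≤ ENNReal.ofReal (2 * Real.exp v) := by
  have hsub : Set.Ico t v ⊆ {t} ∪ Set.Ioo t v := by
    intro x hx
    rcases eq_or_lt_of_le hx.1 with rfl | h
    · exact Or.inl rfl
    · exact Or.inr ⟨h, hx.2⟩
  refine (measure_mono hsub).trans ((measure_union_le _ _).trans ?_)
  have h1 := mSing ν hν0 hνe t ht
  have h2 := mIoo ν hν0 hνe t v ht hv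
  calc ν.measure {t} + ν.measure (Set.Ioo t v)
      ≤ ENNReal.ofReal (Real.exp t) + ENNReal.ofReal (Real.exp v) := add_le_add h1 h2
    _ = ENNReal.ofReal (Real.exp t + Real.exp v) :=
        (ENNReal.ofReal_add (Real.exp_pos _).le (Real.exp_pos _).le).symm
    _ ≤ ENNReal.ofReal (2 * Real.exp v) := by
        apply ENNReal.ofReal_le_ofReal
        have := Real.exp_le_exp.mpr htv; linarith

end bounds

section AB
variable (ν : StieltjesFunction ℝ)
    (hν0 : ∀ t < (0:ℝ), 0 ≤ ν t)
    (hνe : ∀ t < (0:ℝ), ν t ≤ Real.exp t)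

include hν0 hνe

private lemma Abound (a b : ℝ) (hab : a < b) (hb : b < 0) :
    ∫⁻ u in Set.Ioo a b, ENNReal.ofReal (Real.exp (-u)) ∂ν.measure
      ≤ ENNReal.ofReal (1 + (b - a)) := by
  have ha : a < 0 := hab.trans hb
  set μ := ν.measure with hμ
  set F : ℝ → ℝ → ℝ≥0∞ :=
    fun u v => if u < v ∧ v ≤ b then ENNReal.ofReal (Real.exp (-v)) else 0 with hF
  have hFmeas : Measurable (Function.uncurry F) := by
    apply Measurable.ite
    · exact (measurableSet_lt measurable_fst measurable_snd).inter
        (measurable_snd measurableSet_Iic)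
    · exact ((Real.measurable_exp.comp measurable_snd.neg)).ennreal_ofReal
    · exact measurable_const
  have key : ∀ u ∈ Set.Ioo a b,
      ENNReal.ofReal (Real.exp (-u))
        = ENNReal.ofReal (Real.exp (-b)) + ∫⁻ v, F u v ∂volume := by
    intro u hu
    have h1 : (fun v => F u v) = (Set.Ioc u b).indicator (fun v => ENNReal.ofReal (Real.exp (-v))) := by
      funext v; simp [hF, Set.indicator_apply, Set.mem_Ioc]
    have h2 : ∫⁻ v, F u v ∂volume
        = ENNReal.ofReal (Real.exp (-u) - Real.exp (-b)) := by
      rw [h1, lintegral_indicator measurableSet_Ioc]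
      have : ∀ v : ℝ, Real.exp (-v) = Real.exp ((-1)*v) := by intro v; ring_nf
      simp_rw [this]
      rw [lint_exp_Ioc (-1) u b (by norm_num) hu.2.le]
      congr 1; field_simp; ring
    rw [h2, ← ENNReal.ofReal_add (Real.exp_pos _).le
      (by have := Real.exp_le_exp.mpr (neg_le_neg hu.2.le); linarith)]
    congr 1; ring
  calc ∫⁻ u in Set.Ioo a b, ENNReal.ofReal (Real.exp (-u)) ∂μ
      = ∫⁻ u in Set.Ioo a b,
          (ENNReal.ofReal (Real.exp (-b)) + ∫⁻ v, F u v ∂volume) ∂μ := by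
        exact setLIntegral_congr_fun measurableSet_Ioo key
    _ = ENNReal.ofReal (Real.exp (-b)) * μ (Set.Ioo a b)
        + ∫⁻ u in Set.Ioo a b, ∫⁻ v, F u v ∂volume ∂μ := by
        rw [lintegral_add_left measurable_const, setLIntegral_const]
    _ = ENNReal.ofReal (Real.exp (-b)) * μ (Set.Ioo a b)
        + ∫⁻ v, ∫⁻ u in Set.Ioo a b, F u v ∂μ ∂volume := by
        rw [lintegral_lintegral_swap (hFmeas.aemeasurable)]
    _ ≤ ENNReal.ofReal (Real.exp (-b)) * ENNReal.ofReal (Real.exp b)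
        + ∫⁻ v, (Set.Ioc a b).indicator (fun _ => (1:ℝ≥0∞)) v ∂volume := by
        apply add_le_add
        · exact mul_le_mul_right ((measure_mono Set.Ioo_subset_Ioc_self).trans
            (mIoc ν hν0 hνe a b ha hb)) _
        · apply lintegral_mono
          intro v
          show ∫⁻ u in Set.Ioo a b, F u v ∂μ ≤ (Set.Ioc a b).indicator (fun _ => (1:ℝ≥0∞)) v
          rcases le_or_gt v b with hvb | hvb
          · rcases le_or_gt v a with hva | hva
            · have : ∀ u ∈ Set.Ioo a b, F u v = 0 := by
                intro u hu
                simp only [hF, ite_eq_right_iff]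
                intro h; exfalso; linarith [h.1, hu.1]
              rw [setLIntegral_congr_fun measurableSet_Ioo this]
              simp
            · have h1 : (fun u => F u v)
                  = (Set.Iio v).indicator (fun _ => ENNReal.ofReal (Real.exp (-v))) := by
                funext u; simp [hF, Set.indicator_apply, Set.mem_Iio, hvb]
              rw [h1, lintegral_indicator measurableSet_Iio, Measure.restrict_restrict measurableSet_Iio,
                lintegral_const, Measure.restrict_apply_univ]
              have hsub : Set.Iio v ∩ Set.Ioo a b ⊆ Set.Ioc a v := by
                rintro x ⟨hx1, hx2, hx3⟩; exact ⟨hx2, hx1.le⟩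
              have hm : μ (Set.Iio v ∩ Set.Ioo a b) ≤ ENNReal.ofReal (Real.exp v) :=
                (measure_mono hsub).trans (mIoc ν hν0 hνe a v ha (lt_of_le_of_lt hvb hb))
              calc ENNReal.ofReal (Real.exp (-v)) * μ (Set.Iio v ∩ Set.Ioo a b)
                  ≤ ENNReal.ofReal (Real.exp (-v)) * ENNReal.ofReal (Real.exp v) :=
                    mul_le_mul_right hm _
                _ = ENNReal.ofReal (Real.exp (-v) * Real.exp v) :=
                    (ENNReal.ofReal_mul (Real.exp_pos _).le).symm
                _ = 1 := by rw [← Real.exp_add]; simp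
                _ = Set.indicator (Set.Ioc a b) (fun _ => (1:ℝ≥0∞)) v := by
                    rw [Set.indicator_of_mem (Set.mem_Ioc.mpr ⟨hva, hvb⟩)]
          · have : ∀ u, F u v = 0 := by
              intro u; simp only [hF, ite_eq_right_iff]
              intro h; exfalso; linarith [h.2]
            simp [this]
    _ = ENNReal.ofReal 1 + ENNReal.ofReal (b - a) := by
        rw [lintegral_indicator measurableSet_Ioc, setLIntegral_const, one_mul,
          Real.volume_Ioc, ← ENNReal.ofReal_mul (Real.exp_pos _).le, ← Real.exp_add]
        simp
    _ = ENNReal.ofReal (1 + (b - a)) := by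
        rw [← ENNReal.ofReal_add (by norm_num) (by linarith)]

private lemma Bbound (p : ℝ) (hp : 1 < p) (t : ℝ) (ht : t < 0) :
    ∫⁻ u in Set.Ico t 0, ENNReal.ofReal (Real.exp (-(p*u))) ∂ν.measure
      ≤ ENNReal.ofReal (1 + Real.exp t + 2*p*(Real.exp ((1-p)*t) - 1)/(p-1)) := by
  have hp0 : (0:ℝ) < p := by linarith
  set μ := ν.measure with hμ
  set F : ℝ → ℝ → ℝ≥0∞ :=
    fun u v => if u < v ∧ v ≤ 0 then ENNReal.ofReal (p * Real.exp (-(p*v))) else 0 with hF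
  have hFmeas : Measurable (Function.uncurry F) := by
    apply Measurable.ite
    · exact (measurableSet_lt measurable_fst measurable_snd).inter
        (measurable_snd measurableSet_Iic)
    · exact (measurable_const.mul
        (Real.measurable_exp.comp (measurable_snd.const_mul p).neg)).ennreal_ofReal
    · exact measurable_const
  have key : ∀ u ∈ Set.Ico t 0,
      ENNReal.ofReal (Real.exp (-(p*u)))
        = ENNReal.ofReal 1 + ∫⁻ v, F u v ∂volume := by
    intro u hu
    have h1 : (fun v => F u v)
        = (Set.Ioc u 0).indicator (fun v => ENNReal.ofReal (p * Real.exp (-(p*v)))) := by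
      funext v; simp [hF, Set.indicator_apply, Set.mem_Ioc]
    have h2 : ∫⁻ v, F u v ∂volume
        = ENNReal.ofReal (Real.exp (-(p*u)) - 1) := by
      rw [h1, lintegral_indicator measurableSet_Ioc]
      have e1 : ∀ v : ℝ, p * Real.exp (-(p*v)) = p * Real.exp ((-p)*v) := by
        intro v; ring_nf
      simp_rw [e1, ENNReal.ofReal_mul hp0.le]
      rw [lintegral_const_mul' _ _ ENNReal.ofReal_ne_top,
        lint_exp_Ioc (-p) u 0 (by linarith) hu.2.le,
        ← ENNReal.ofReal_mul hp0.le]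
      have hpne : p ≠ 0 := by linarith
      congr 1
      rw [mul_zero, Real.exp_zero, show (-p)*u = -(p*u) by ring, div_neg, mul_neg,
        ← mul_div_assoc, mul_div_cancel_left₀ _ hpne, neg_sub]
    rw [h2, ← ENNReal.ofReal_add (by norm_num)]
    · congr 1; ring
    · have : (0:ℝ) ≤ -(p*u) := by nlinarith [hu.2.le]
      linarith [Real.one_le_exp this]
  calc ∫⁻ u in Set.Ico t 0, ENNReal.ofReal (Real.exp (-(p*u))) ∂μ
      = ∫⁻ u in Set.Ico t 0, (ENNReal.ofReal 1 + ∫⁻ v, F u v ∂volume) ∂μ := by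
        exact setLIntegral_congr_fun measurableSet_Ico key
    _ = ENNReal.ofReal 1 * μ (Set.Ico t 0)
        + ∫⁻ v, ∫⁻ u in Set.Ico t 0, F u v ∂μ ∂volume := by
        rw [lintegral_add_left measurable_const, setLIntegral_const,
          lintegral_lintegral_swap (hFmeas.aemeasurable)]
    _ ≤ (ENNReal.ofReal (Real.exp t) + ENNReal.ofReal 1)
        + ∫⁻ v, (Set.Ioc t 0).indicator
            (fun v => ENNReal.ofReal (2 * p * Real.exp ((1-p)*v))) v ∂volume := by
        apply add_le_add
        · have he : ENNReal.ofReal 1 * μ (Set.Ico t 0) = μ (Set.Ico t 0) := by simp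
          rw [he]
          have hsub : Set.Ico t 0 ⊆ {t} ∪ Set.Ioo t 0 := by
            intro x hx
            rcases eq_or_lt_of_le hx.1 with rfl | h
            · exact Or.inl rfl
            · exact Or.inr ⟨h, hx.2⟩
          exact (measure_mono hsub).trans ((measure_union_le _ _).trans
            (add_le_add (mSing ν hν0 hνe t ht) (mIoo0 ν hν0 hνe t ht)))
        · apply lintegral_mono
          intro v
          show ∫⁻ u in Set.Ico t 0, F u v ∂μ
            ≤ (Set.Ioc t 0).indicator (fun v => ENNReal.ofReal (2 * p * Real.exp ((1-p)*v))) v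
          rcases le_or_gt v 0 with hv0 | hv0
          · rcases le_or_gt v t with hvt | hvt
            · have : ∀ u ∈ Set.Ico t 0, F u v = 0 := by
                intro u hu
                simp only [hF, ite_eq_right_iff]
                intro h; exfalso; linarith [h.1, hu.1]
              rw [setLIntegral_congr_fun measurableSet_Ico this]
              simp
            · have h1 : (fun u => F u v)
                  = (Set.Iio v).indicator (fun _ => ENNReal.ofReal (p * Real.exp (-(p*v)))) := by
                funext u; simp [hF, Set.indicator_apply, Set.mem_Iio, hv0]
              rw [h1, lintegral_indicator measurableSet_Iio,
                Measure.restrict_restrict measurableSet_Iio,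
                lintegral_const, Measure.restrict_apply_univ]
              have hsub : Set.Iio v ∩ Set.Ico t 0 ⊆ Set.Ico t v := by
                rintro x ⟨hx1, hx2, hx3⟩; exact ⟨hx2, hx1⟩
              have hm : μ (Set.Iio v ∩ Set.Ico t 0) ≤ ENNReal.ofReal (2 * Real.exp v) :=
                (measure_mono hsub).trans (mIco ν hν0 hνe t v ht hvt.le hv0)
              calc ENNReal.ofReal (p * Real.exp (-(p*v))) * μ (Set.Iio v ∩ Set.Ico t 0)
                  ≤ ENNReal.ofReal (p * Real.exp (-(p*v))) * ENNReal.ofReal (2 * Real.exp v) :=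
                    mul_le_mul_right hm _
                _ = ENNReal.ofReal (p * Real.exp (-(p*v)) * (2 * Real.exp v)) :=
                    (ENNReal.ofReal_mul (by positivity)).symm
                _ = ENNReal.ofReal (2 * p * Real.exp ((1-p)*v)) := by
                    congr 1
                    rw [show (1-p)*v = -(p*v) + v by ring, Real.exp_add]; ring
                _ = Set.indicator (Set.Ioc t 0)
                      (fun v => ENNReal.ofReal (2 * p * Real.exp ((1-p)*v))) v := by
                    rw [Set.indicator_of_mem (Set.mem_Ioc.mpr ⟨hvt, hv0⟩)]
          · have : ∀ u, F u v = 0 := by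
              intro u; simp only [hF, ite_eq_right_iff]
              intro h; exfalso; linarith [h.2]
            simp [this]
    _ ≤ (ENNReal.ofReal (Real.exp t) + ENNReal.ofReal 1)
        + ENNReal.ofReal (2*p*(Real.exp ((1-p)*t) - 1)/(p-1)) := by
        apply add_le_add_right
        rw [lintegral_indicator measurableSet_Ioc]
        have e1 : ∀ v : ℝ, 2 * p * Real.exp ((1-p)*v) = 2*p * Real.exp ((1-p)*v) := fun v => rfl
        simp_rw [ENNReal.ofReal_mul (by positivity : (0:ℝ) ≤ 2*p)]
        rw [lintegral_const_mul' _ _ ENNReal.ofReal_ne_top,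
          lint_exp_Ioc (1-p) t 0 (by linarith) ht.le,
          ← ENNReal.ofReal_mul (by positivity : (0:ℝ) ≤ 2*p)]
        apply ENNReal.ofReal_le_ofReal
        rw [mul_zero, Real.exp_zero]
        rw [show (1 - Real.exp ((1-p)*t))/(1-p) = (Real.exp ((1-p)*t) - 1)/(p-1) by
          rw [div_eq_div_iff (by linarith) (by linarith)]; ring, mul_div_assoc]
    _ ≤ ENNReal.ofReal (1 + Real.exp t + 2*p*(Real.exp ((1-p)*t) - 1)/(p-1)) := by
        have h1 : (0:ℝ) ≤ (1-p)*t := by nlinarith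
        have h2 := Real.one_le_exp h1
        have h3 : (0:ℝ) < p - 1 := by linarith
        have h4 : (0:ℝ) ≤ 2*p*(Real.exp ((1-p)*t) - 1)/(p-1) := by
          apply div_nonneg _ h3.le; nlinarith
        rw [← ENNReal.ofReal_add (Real.exp_pos t).le (by norm_num),
          ← ENNReal.ofReal_add (by positivity) h4]
        apply ENNReal.ofReal_le_ofReal; linarith

end AB

theorem liminf_stieltjes_le (ν : StieltjesFunction ℝ)
    (hν0 : ∀ t < (0:ℝ), 0 ≤ ν t)
    (hνe : ∀ t < (0:ℝ), ν t ≤ Real.exp t)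
    (p : ℝ) (hp : 1 < p) :
    Filter.liminf
      (fun t : ℝ => Real.exp (-t) * ∫ s in Set.Ioo t 0, Real.exp (-(p * (s - t))) ∂ν.measure)
      Filter.atBot ≤ 2 / (p - 1) := by
  have hp1 : (0:ℝ) < p - 1 := by linarith
  have hp0 : (0:ℝ) < p := by linarith
  set μ := ν.measure with hμ
  set f : ℝ → ℝ :=
    fun t => Real.exp (-t) * ∫ s in Set.Ioo t 0, Real.exp (-(p * (s - t))) ∂μ with hf
  set g : ℝ → ℝ≥0∞ :=
    fun s => ∫⁻ u in Set.Ioo s 0, ENNReal.ofReal (Real.exp (-(p * (u - s)))) ∂μ with hg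
  have hgfin : ∀ s, g s ≠ ⊤ := by
    intro s
    have hb : g s ≤ μ (Set.Ioo s 0) := by
      calc g s ≤ ∫⁻ u in Set.Ioo s 0, 1 ∂μ := by
            apply lintegral_mono_ae
            rw [ae_restrict_iff' measurableSet_Ioo]
            apply ae_of_all
            intro u hu
            exact ENNReal.ofReal_le_one.mpr
              (Real.exp_le_one_iff.mpr (by nlinarith [hu.1]))
        _ = μ (Set.Ioo s 0) := by rw [setLIntegral_const, one_mul]
    exact ne_top_of_le_ne_top (ne_of_eq_of_ne ν.measure_Ioo ENNReal.ofReal_ne_top) hb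
  have hfg : ∀ s, f s = Real.exp (-s) * (g s).toReal := by
    intro s
    simp only [hf, hg]
    congr 1
    exact MeasureTheory.integral_eq_lintegral_of_nonneg_ae
      (ae_of_all _ fun u => (Real.exp_pos _).le)
      (Real.continuous_exp.comp
        ((continuous_const.mul (continuous_id.sub continuous_const)).neg)).aestronglyMeasurable
  have hfnn : ∀ s, 0 ≤ f s := by
    intro s
    exact mul_nonneg (Real.exp_pos _).le
      (MeasureTheory.integral_nonneg fun u => (Real.exp_pos _).le)
  set C : ℝ := 2 + 2*p/(p-1) with hC
  have hCpos : 0 < C := by rw [hC]; positivity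
  have hfreq : ∃ᶠ t in Filter.atBot, f t ≤ 2/(p-1) := by
    rw [Filter.frequently_atBot]
    intro T
    by_contra hcon
    push_neg at hcon
    set t := min T (-(2+C)) with htdef
    have htT : t ≤ T := min_le_left _ _
    have htC : t ≤ -(2+C) := min_le_right _ _
    have ht0 : t < 0 := lt_of_le_of_lt htC (by linarith)
    set G := ∫⁻ s in Set.Ioc (2*t) t, ENNReal.ofReal (Real.exp (-s)) * g s ∂volume with hG
    -- upper bound on G
    set F1 : ℝ → ℝ → ℝ≥0∞ := fun s u =>
      if s < u ∧ u < 0 then ENNReal.ofReal (Real.exp (-s) * Real.exp (-(p*(u-s)))) else 0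
      with hF1
    have hF1meas : Measurable (Function.uncurry F1) := by
      apply Measurable.ite
      · exact (measurableSet_lt measurable_fst measurable_snd).inter
          (measurable_snd measurableSet_Iio)
      · exact ((Real.measurable_exp.comp measurable_fst.neg).mul
          (Real.measurable_exp.comp
            (((measurable_snd.sub measurable_fst).const_mul p).neg))).ennreal_ofReal
      · exact measurable_const
    have hstep1 : ∀ s, ENNReal.ofReal (Real.exp (-s)) * g s = ∫⁻ u, F1 s u ∂μ := by
      intro s
      simp only [hg]
      rw [← lintegral_const_mul' _ _ ENNReal.ofReal_ne_top,
        ← lintegral_indicator measurableSet_Ioo]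
      congr 1
      funext u
      simp only [Set.indicator_apply, Set.mem_Ioo, hF1]
      by_cases h : s < u ∧ u < 0
      · rw [if_pos h, if_pos h, ← ENNReal.ofReal_mul (Real.exp_pos _).le]
      · rw [if_neg h, if_neg h]
    have hswap : G = ∫⁻ u, ∫⁻ s in Set.Ioc (2*t) t, F1 s u ∂volume ∂μ := by
      rw [hG]
      simp_rw [hstep1]
      exact lintegral_lintegral_swap hF1meas.aemeasurable
    set D : ℝ → ℝ≥0∞ := (Set.Ioo (2*t) 0).indicator
      (fun u => ENNReal.ofReal (Real.exp (-(p*u)) * Real.exp ((p-1) * min t u) / (p-1)))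
      with hD
    have hinner : ∀ u, ∫⁻ s in Set.Ioc (2*t) t, F1 s u ∂volume ≤ D u := by
      intro u
      rcases lt_or_ge u 0 with hu0 | hu0
      · rcases lt_or_ge (2*t) u with h2tu | h2tu
        · have h1 : (fun s => F1 s u) = (Set.Iio u).indicator
              (fun s => ENNReal.ofReal (Real.exp (-s) * Real.exp (-(p*(u-s))))) := by
            funext s; simp [hF1, Set.indicator_apply, Set.mem_Iio, hu0]
          rw [h1, lintegral_indicator measurableSet_Iio,
            Measure.restrict_restrict measurableSet_Iio]
          have hsub : Set.Iio u ∩ Set.Ioc (2*t) t ⊆ Set.Ioc (2*t) (min t u) := by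
            rintro x ⟨hx1, hx2, hx3⟩; exact ⟨hx2, le_min hx3 hx1.le⟩
          calc ∫⁻ s in Set.Iio u ∩ Set.Ioc (2*t) t,
                ENNReal.ofReal (Real.exp (-s) * Real.exp (-(p*(u-s)))) ∂volume
              ≤ ∫⁻ s in Set.Ioc (2*t) (min t u),
                ENNReal.ofReal (Real.exp (-s) * Real.exp (-(p*(u-s)))) ∂volume :=
                lintegral_mono_set hsub
            _ = ∫⁻ s in Set.Ioc (2*t) (min t u),
                ENNReal.ofReal (Real.exp (-(p*u))) * ENNReal.ofReal (Real.exp ((p-1)*s)) ∂volume := by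
                apply setLIntegral_congr_fun measurableSet_Ioc ?_
                intro s hs
                beta_reduce
                rw [← ENNReal.ofReal_mul (Real.exp_pos _).le, ← Real.exp_add, ← Real.exp_add]
                congr 2; ring
            _ = ENNReal.ofReal (Real.exp (-(p*u)))
                * ∫⁻ s in Set.Ioc (2*t) (min t u), ENNReal.ofReal (Real.exp ((p-1)*s)) ∂volume :=
                lintegral_const_mul' _ _ ENNReal.ofReal_ne_top
            _ ≤ ENNReal.ofReal (Real.exp (-(p*u)))
                * ENNReal.ofReal (Real.exp ((p-1) * min t u)/(p-1)) :=
                mul_le_mul_right (lint_exp_Ioc_le (p-1) (2*t) (min t u) hp1) _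
            _ = D u := by
                rw [← ENNReal.ofReal_mul (Real.exp_pos _).le, hD,
                  Set.indicator_of_mem (Set.mem_Ioo.mpr ⟨h2tu, hu0⟩), mul_div_assoc]
        · have hz : ∀ s ∈ Set.Ioc (2*t) t, F1 s u = 0 := by
            intro s hs; simp only [hF1, ite_eq_right_iff]
            intro h; exfalso; linarith [h.1, hs.1]
          rw [setLIntegral_congr_fun measurableSet_Ioc hz]
          simp
      · have hz : ∀ s, F1 s u = 0 := by
          intro s; simp only [hF1, ite_eq_right_iff]
          intro h; exfalso; linarith [h.2]
        simp [hz]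
    have part1 : ∫⁻ u in Set.Ioo (2*t) t,
        ENNReal.ofReal (Real.exp (-(p*u)) * Real.exp ((p-1) * min t u) / (p-1)) ∂μ
        ≤ ENNReal.ofReal ((1 + (t - 2*t))/(p-1)) := by
      have e : ∀ u ∈ Set.Ioo (2*t) t,
          ENNReal.ofReal (Real.exp (-(p*u)) * Real.exp ((p-1) * min t u) / (p-1))
            = ENNReal.ofReal (1/(p-1)) * ENNReal.ofReal (Real.exp (-u)) := by
        intro u hu
        rw [min_eq_right hu.2.le, ← ENNReal.ofReal_mul (by positivity)]
        congr 1
        rw [← Real.exp_add, show -(p*u) + (p-1)*u = -u by ring]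
        ring
      rw [setLIntegral_congr_fun measurableSet_Ioo e,
        lintegral_const_mul' _ _ ENNReal.ofReal_ne_top]
      calc _ ≤ ENNReal.ofReal (1/(p-1)) * ENNReal.ofReal (1 + (t - 2*t)) :=
            mul_le_mul_right (Abound ν hν0 hνe (2*t) t (by linarith) ht0) _
        _ = ENNReal.ofReal ((1 + (t - 2*t))/(p-1)) := by
            rw [← ENNReal.ofReal_mul (by positivity)]; congr 1; ring
    have part2 : ∫⁻ u in Set.Ico t 0,
        ENNReal.ofReal (Real.exp (-(p*u)) * Real.exp ((p-1) * min t u) / (p-1)) ∂μ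
        ≤ ENNReal.ofReal (C/(p-1)) := by
      have e : ∀ u ∈ Set.Ico t 0,
          ENNReal.ofReal (Real.exp (-(p*u)) * Real.exp ((p-1) * min t u) / (p-1))
            = ENNReal.ofReal (Real.exp ((p-1)*t)/(p-1)) * ENNReal.ofReal (Real.exp (-(p*u))) := by
        intro u hu
        rw [min_eq_left hu.1, ← ENNReal.ofReal_mul (by positivity)]
        congr 1; ring
      rw [setLIntegral_congr_fun measurableSet_Ico e,
        lintegral_const_mul' _ _ ENNReal.ofReal_ne_top]
      calc _ ≤ ENNReal.ofReal (Real.exp ((p-1)*t)/(p-1))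
            * ENNReal.ofReal (1 + Real.exp t + 2*p*(Real.exp ((1-p)*t) - 1)/(p-1)) :=
            mul_le_mul_right (Bbound ν hν0 hνe p hp t ht0) _
        _ = ENNReal.ofReal (Real.exp ((p-1)*t)
              * (1 + Real.exp t + 2*p*(Real.exp ((1-p)*t) - 1)/(p-1)) / (p-1)) := by
            rw [← ENNReal.ofReal_mul (by positivity)]; congr 1; ring
        _ ≤ ENNReal.ofReal (C/(p-1)) := by
            apply ENNReal.ofReal_le_ofReal
            apply (div_le_div_iff_of_pos_right hp1).mpr
            have hx : Real.exp ((p-1)*t) ≤ 1 := Real.exp_le_one_iff.mpr (by nlinarith)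
            have hxy : Real.exp ((p-1)*t) * Real.exp ((1-p)*t) = 1 := by
              rw [← Real.exp_add, show (p-1)*t + (1-p)*t = 0 by ring, Real.exp_zero]
            have hxt : Real.exp ((p-1)*t) * Real.exp t ≤ 1 := by
              rw [← Real.exp_add]
              exact Real.exp_le_one_iff.mpr (by nlinarith)
            have hxpos := Real.exp_pos ((p-1)*t)
            have expand : Real.exp ((p-1)*t)
                * (1 + Real.exp t + 2*p*(Real.exp ((1-p)*t) - 1)/(p-1))
                = Real.exp ((p-1)*t) + Real.exp ((p-1)*t)*Real.exp t
                  + 2*p/(p-1)*(Real.exp ((p-1)*t)*Real.exp ((1-p)*t))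
                  - 2*p/(p-1)*Real.exp ((p-1)*t) := by ring
            rw [expand, hxy, hC]
            have h2p : (0:ℝ) ≤ 2*p/(p-1) := by positivity
            nlinarith [mul_nonneg h2p hxpos.le]
    have hGub : G ≤ ENNReal.ofReal ((1 + (t - 2*t) + C)/(p-1)) := by
      rw [hswap]
      calc ∫⁻ u, ∫⁻ s in Set.Ioc (2*t) t, F1 s u ∂volume ∂μ
          ≤ ∫⁻ u, D u ∂μ := lintegral_mono hinner
        _ = ∫⁻ u in Set.Ioo (2*t) 0,
            ENNReal.ofReal (Real.exp (-(p*u)) * Real.exp ((p-1) * min t u) / (p-1)) ∂μ := by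
            rw [hD, lintegral_indicator measurableSet_Ioo]
        _ ≤ ∫⁻ u in Set.Ioo (2*t) t,
              ENNReal.ofReal (Real.exp (-(p*u)) * Real.exp ((p-1) * min t u) / (p-1)) ∂μ
            + ∫⁻ u in Set.Ico t 0,
              ENNReal.ofReal (Real.exp (-(p*u)) * Real.exp ((p-1) * min t u) / (p-1)) ∂μ := by
            rw [← Set.Ioo_union_Ico_eq_Ioo (by linarith : 2*t < t) ht0.le]
            exact lintegral_union_le _ _ _
        _ ≤ ENNReal.ofReal ((1 + (t - 2*t))/(p-1)) + ENNReal.ofReal (C/(p-1)) :=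
            add_le_add part1 part2
        _ = ENNReal.ofReal ((1 + (t - 2*t) + C)/(p-1)) := by
            rw [← ENNReal.ofReal_add
              (div_nonneg (by linarith) hp1.le) (div_nonneg hCpos.le hp1.le)]
            congr 1; ring
    -- lower bound on G
    have hGlb : ENNReal.ofReal (2/(p-1) * (t - 2*t)) ≤ G := by
      have hv : ENNReal.ofReal (2/(p-1) * (t - 2*t))
          = ∫⁻ s in Set.Ioc (2*t) t, ENNReal.ofReal (2/(p-1)) ∂volume := by
        rw [setLIntegral_const, Real.volume_Ioc, ← ENNReal.ofReal_mul (by positivity)]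
      rw [hv, hG]
      apply lintegral_mono_ae
      rw [ae_restrict_iff' measurableSet_Ioc]
      apply ae_of_all
      intro s hs
      have hsT : s ≤ T := hs.2.trans htT
      have hlt : 2/(p-1) < f s := hcon s hsT
      calc ENNReal.ofReal (2/(p-1)) ≤ ENNReal.ofReal (f s) := ENNReal.ofReal_le_ofReal hlt.le
        _ = ENNReal.ofReal (Real.exp (-s)) * g s := by
            rw [hfg s, ENNReal.ofReal_mul (Real.exp_pos _).le, ENNReal.ofReal_toReal (hgfin s)]
    have hcomb := hGlb.trans hGub
    rw [ENNReal.ofReal_le_ofReal_iff (div_nonneg (by linarith) hp1.le)] at hcomb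
    rw [show 2/(p-1)*(t-2*t) = (2*(t-2*t))/(p-1) by ring] at hcomb
    rw [div_le_div_iff_of_pos_right hp1] at hcomb
    linarith
  exact Filter.liminf_le_of_frequently_le hfreq
    (Filter.isBoundedUnder_of ⟨0, fun x => hfnn x⟩)
end

section
/- Let $\Theta_1, \dots, \Theta_r$ be real numbers (representing the values $\Theta(\mathfrak{h}^i)_{\xi\bar\xi}$ of curvature forms on a fixed tangent vector). If for all $\lambda_1, \dots, \lambda_r \in [0,1]$ with $\lambda_1 + \cdots + \lambda_r = 1$ one has $\sum_i \lambda_i \Theta_i \geq \frac{1}{r+1}(\Theta_1 + \cdots + \Theta_r)$, then $\Theta_1 + \cdots + \Theta_r \geq 0$ and $\min_i \Theta_i \geq \frac{1}{r}\max_i \Theta_i$. -/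
/-- If every convex combination of the curvature values `Θ₁, …, Θ_r` is bounded below by
`(Θ₁ + ⋯ + Θ_r)/(r+1)`, then `Θ₁ + ⋯ + Θ_r ≥ 0` and `min Θᵢ ≥ (max Θᵢ)/r`. -/
theorem convex_combination_curvature_constraints (r : ℕ) (hr : 1 ≤ r) (Θ : Fin r → ℝ)
    (h : ∀ lam : Fin r → ℝ, (∀ i, 0 ≤ lam i ∧ lam i ≤ 1) → (∑ i, lam i) = 1 →
      (1 / ((r : ℝ) + 1)) * ∑ i, Θ i ≤ ∑ i, lam i * Θ i) :
    0 ≤ ∑ i, Θ i ∧ ∀ i j, (1 / (r : ℝ)) * Θ j ≤ Θ i := by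
  set S := ∑ i, Θ i with hS
  -- Key: each Θ i ≥ S/(r+1)
  have key : ∀ i, (1 / ((r : ℝ) + 1)) * S ≤ Θ i := by
    intro i
    have := h (fun k => if k = i then 1 else 0)
      (by intro k; by_cases hk : k = i <;> simp [hk])
      (by simp)
    simpa using this
  have hr1 : (0 : ℝ) < (r : ℝ) + 1 := by positivity
  have hrpos : (0 : ℝ) < (r : ℝ) := by exact_mod_cast hr
  -- Sum the key inequality
  have hsum : (r : ℝ) * ((1 / ((r : ℝ) + 1)) * S) ≤ S := by
    calc (r : ℝ) * ((1 / ((r : ℝ) + 1)) * S)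
        = ∑ _i : Fin r, (1 / ((r : ℝ) + 1)) * S := by
          simp [Finset.sum_const, mul_comm]
      _ ≤ ∑ i, Θ i := Finset.sum_le_sum fun i _ => key i
      _ = S := hS.symm
  have hT : ((r : ℝ) + 1) * ((1 / ((r : ℝ) + 1)) * S) = S := by
    field_simp
  have hSnn : 0 ≤ S := by nlinarith [hsum, hT]
  refine ⟨hSnn, fun i j => ?_⟩
  have hΘnn : ∀ k, 0 ≤ Θ k := fun k =>
    le_trans (by positivity) (key k)
  rcases eq_or_lt_of_le hr with hr1' | hr2
  · -- r = 1: then i = j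
    have : i = j := by omega
    subst this
    rw [← hr1']
    simpa using le_refl (Θ i)
  · -- r ≥ 2
    have hr2' : (2 : ℝ) ≤ (r : ℝ) := by exact_mod_cast hr2
    -- S = Θ j + sum over erase j
    have hsplit : S = Θ j + ∑ k ∈ Finset.univ.erase j, Θ k := by
      rw [hS, ← Finset.add_sum_erase _ _ (Finset.mem_univ j)]
    have hcard : (Finset.univ.erase j).card = r - 1 := by
      simp [Finset.card_erase_of_mem]
    have herase : ((r : ℝ) - 1) * ((1 / ((r : ℝ) + 1)) * S)
        ≤ ∑ k ∈ Finset.univ.erase j, Θ k := by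
      calc ((r : ℝ) - 1) * ((1 / ((r : ℝ) + 1)) * S)
          = ∑ _k ∈ Finset.univ.erase j, (1 / ((r : ℝ) + 1)) * S := by
            rw [Finset.sum_const, hcard, nsmul_eq_mul]
            have : ((r - 1 : ℕ) : ℝ) = (r : ℝ) - 1 := by
              push_cast [Nat.cast_sub hr]; ring
            rw [this]
        _ ≤ _ := Finset.sum_le_sum fun k _ => key k
    -- deduce Θ j ≤ 2 * (S/(r+1))
    have hj : Θ j ≤ 2 * ((1 / ((r : ℝ) + 1)) * S) := by linarith [hT, hsplit, herase]
    have hi := key i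
    have hjnn := hΘnn j
    -- Θ j / r ≤ Θ j / 2 ≤ S/(r+1) ≤ Θ i
    have : (1 / (r : ℝ)) * Θ j ≤ (1 / 2) * Θ j := by
      apply mul_le_mul_of_nonneg_right _ hjnn
      rw [div_le_div_iff₀ hrpos (by norm_num)]
      linarith
    nlinarith
end
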